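/- arXiv:2405.01387 — 3 statements merged into one kernel-verified Lean document; each statement's English description precedes it below -/
import Mathlib

section
/- Every convex polytope X ⊆ ℝ^n is lexicographically stable: for all δ > 0 there exists ε > 0 such that every possible output x̂ of the progressive filling algorithm on (X, ε) satisfies σ_k(x*) − σ_k(x̂) < δ for all k ∈ [n], where x* is the (unique) lexicographic maximum of X. -/
noncomputable def sortedComp {n : ℕ} (x : Fin n → ℝ) (k : Fin n) : ℝ :=
  x (Tuple.sort x k)

def IsLexMax {n : ℕ} (X : Set (Fin n → ℝ)) (y : Fin n → ℝ) : Prop :=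
  y ∈ X ∧ ∀ x ∈ X, x = y ∨ ∃ i : Fin n,
    (∀ j : Fin n, j < i → sortedComp y j = sortedComp x j) ∧
    sortedComp x i < sortedComp y i

/-- The value of the optimization problem at iteration `k` of the progressive
filling algorithm, given previous iterate `y`. -/
noncomputable def Hfun {n : ℕ} (X : Set (Fin n → ℝ)) (k : Fin n) (y : Fin n → ℝ) : ℝ :=
  sSup {v : ℝ | ∃ z ∈ X,
    (∀ i : Fin n, i < k → sortedComp y i ≤ sortedComp z i) ∧ v = sortedComp z k}

/-- `out` is a possible output of the progressive filling algorithm on `(X, ε)`. -/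
def PossibleOutput {n : ℕ} (X : Set (Fin n → ℝ)) (ε : ℝ) (out : Fin n → ℝ) : Prop :=
  ∃ seq : Fin (n + 1) → (Fin n → ℝ),
    seq (Fin.last n) = out ∧
    ∀ k : Fin n,
      seq k.succ ∈ X ∧
      (∀ i : Fin n, i < k → sortedComp (seq k.castSucc) i ≤ sortedComp (seq k.succ) i) ∧
      Hfun X k (seq k.castSucc) - ε ≤ sortedComp (seq k.succ) k


/-!
Suppose the claim fails for some `δ`. Then there are runs with tolerances `ε_m → 0` whose outputs
fall `δ` short of `xstar` in some order statistic. The polytope is compact, so along an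
ultrafilter all iterates of these runs converge, and the limits form an exact run: step `k + 1`
attains `σ_k xstar`, and by lexicographic maximality every later iterate keeps exactly this value.
The output therefore converges to the order statistics of `xstar`, a contradiction.

Polyhedrality is needed to pass to the limit in the optimisation step, i.e. for the lower
semicontinuity of `Hfun X k` at points `u` whose first `k` order statistics are those of `xstar`.
These points form a convex set, because the sum of the `i + 1` smallest entries is concave, and
near `u` a polytope contains `v + t • (xstar - u)` for all nearby `v` and any fixed `t < 1`.
-/
open Filter Topology Finset

theorem IsCompact.exists_tendsto_ultrafilter {ι E : Type*} [TopologicalSpace E] {s : Set E}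
    (hs : IsCompact s) (U : Ultrafilter ι) {f : ι → E} (hf : ∀ᶠ m in U, f m ∈ s) :
    ∃ a ∈ s, Tendsto f U (𝓝 a) :=
  hs.ultrafilter_le_nhds (U.map f) (by rwa [Ultrafilter.coe_map, le_principal_iff])

theorem Set.Finite.exists_pos_add_le_of_lt {V : Set ℝ} (hV : V.Finite) :
    ∃ Δ > 0, ∀ s ∈ V, ∀ t ∈ V, s < t → s + Δ ≤ t := by
  have hsmall : ∀ᶠ Δ in 𝓝[>] (0 : ℝ), ∀ p ∈ V ×ˢ V, p.1 < p.2 → p.1 + Δ ≤ p.2 := by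
    refine (eventually_all_finite (hV.prod hV)).2 fun p _ => ?_
    by_cases hp : p.1 < p.2
    · filter_upwards [nhdsWithin_le_nhds (eventually_le_nhds (sub_pos.2 hp))] with Δ hΔ _
      linarith
    · exact Eventually.of_forall fun _ h => absurd h hp
  obtain ⟨Δ, hΔ, hΔ₀⟩ := (hsmall.and self_mem_nhdsWithin).exists
  exact ⟨Δ, hΔ₀, fun s hs t ht hst => hΔ (s, t) ⟨hs, ht⟩ hst⟩

section Polytope

variable {E : Type*} [AddCommGroup E] [Module ℝ E]

theorem add_smul_sub_mem_convexHull_of_weights {S : Finset E} {w l α : E → ℝ} {t : ℝ}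
    (ht : 0 ≤ t) (hw₀ : ∀ y ∈ S, 0 ≤ w y) (hw₁ : ∑ y ∈ S, w y = 1) (hl₀ : ∀ y ∈ S, 0 ≤ l y)
    (hl₁ : ∑ y ∈ S, l y = 1) (hα₀ : ∀ y ∈ S, 0 ≤ α y) (hα₁ : ∑ y ∈ S, α y = 1)
    (hwl : ∀ y ∈ S, 0 < l y → t * l y < w y) :
    ∑ y ∈ S, w y • y + t • (∑ y ∈ S, α y • y - ∑ y ∈ S, l y • y) ∈ convexHull ℝ (S : Set E) := by
  have hβ₀ : ∀ y ∈ S, 0 ≤ w y - t * l y + t * α y := by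
    intro y hy
    have := mul_nonneg ht (hα₀ y hy)
    rcases (hl₀ y hy).lt_or_eq with hly | hly
    · linarith [hwl y hy hly]
    · rw [← hly]; linarith [hw₀ y hy]
  have hβ₁ : ∑ y ∈ S, (w y - t * l y + t * α y) = 1 := by
    rw [sum_add_distrib, sum_sub_distrib, ← mul_sum, ← mul_sum, hw₁, hl₁, hα₁]; ring
  convert (convex_convexHull ℝ _).sum_mem hβ₀ hβ₁ fun y hy => subset_convexHull ℝ _ hy using 1
  simp only [add_smul, sub_smul, mul_smul, sum_add_distrib, sum_sub_distrib, ← smul_sum, smul_sub]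
  abel

variable [TopologicalSpace E] [IsTopologicalAddGroup E] [ContinuousSMul ℝ E] [T2Space E]

/-- Along an ultrafilter the barycentric weights of the points near `u` converge to weights of
`u`, and every weight that is positive in the limit eventually exceeds `t` times its limit. -/
theorem eventually_add_smul_sub_mem_convexHull (S : Finset E) {a u : E}
    (ha : a ∈ convexHull ℝ (S : Set E)) {t : ℝ} (ht₀ : 0 ≤ t) (ht₁ : t < 1) :
    ∀ᶠ v in 𝓝[convexHull ℝ (S : Set E)] u, v + t • (a - u) ∈ convexHull ℝ (S : Set E) := by
  set X := convexHull ℝ (S : Set E)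
  refine mem_iff_ultrafilter.2 fun U hU => ?_
  have hUX : ∀ᶠ v in U, v ∈ X := hU self_mem_nhdsWithin
  have hUu : Tendsto id (U : Filter E) (𝓝 u) := hU.trans nhdsWithin_le_nhds
  have hweights : ∀ v, ∃ w : E → ℝ, v ∈ X →
      (∀ y ∈ S, 0 ≤ w y) ∧ ∑ y ∈ S, w y = 1 ∧ ∑ y ∈ S, w y • y = v := by
    intro v
    by_cases hv : v ∈ X
    · obtain ⟨w, hw⟩ := Finset.mem_convexHull'.1 hv
      exact ⟨w, fun _ => hw⟩
    · exact ⟨0, fun h => absurd h hv⟩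
  choose w hw using hweights
  have hlim : ∀ y, ∃ c, y ∈ S → Tendsto (fun v => w v y) U (𝓝 c) := by
    intro y
    by_cases hy : y ∈ S
    · obtain ⟨c, -, hc⟩ := isCompact_Icc.exists_tendsto_ultrafilter U (s := Set.Icc (0 : ℝ) 1)
        (hUX.mono fun v hv => ⟨(hw v hv).1 y hy, (hw v hv).2.1 ▸
          single_le_sum (fun z hz => (hw v hv).1 z hz) hy⟩)
      exact ⟨c, fun _ => hc⟩
    · exact ⟨0, fun h => absurd h hy⟩
  choose l hl using hlim
  have hl₀ : ∀ y ∈ S, 0 ≤ l y := fun y hy =>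
    ge_of_tendsto (hl y hy) (hUX.mono fun v hv => (hw v hv).1 y hy)
  have hl₁ : ∑ y ∈ S, l y = 1 :=
    tendsto_nhds_unique (tendsto_finsetSum S hl)
      (tendsto_const_nhds.congr' (hUX.mono fun v hv => (hw v hv).2.1.symm))
  have hlu : ∑ y ∈ S, l y • y = u :=
    tendsto_nhds_unique (tendsto_finsetSum S fun y hy => (hl y hy).smul_const y)
      (hUu.congr' (hUX.mono fun v hv => (hw v hv).2.2.symm))
  have hlarge : ∀ᶠ v in U, ∀ y ∈ S, 0 < l y → t * l y < w v y := by
    refine (eventually_all_finset S).2 fun y hy => ?_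
    by_cases hly : 0 < l y
    · filter_upwards [(hl y hy).eventually (lt_mem_nhds (show t * l y < l y by nlinarith))]
        with v hv _ using hv
    · exact Eventually.of_forall fun _ h => absurd h hly
  obtain ⟨α, hα₀, hα₁, hαa⟩ := Finset.mem_convexHull'.1 ha
  filter_upwards [hUX, hlarge] with v hv hvl
  obtain ⟨hw₀, hw₁, hwv⟩ := hw v hv
  rw [← hwv, ← hαa, ← hlu]
  exact add_smul_sub_mem_convexHull_of_weights ht₀ hw₀ hw₁ hl₀ hl₁ hα₀ hα₁ hvl

end Polytope

theorem Monotone.sum_Iic_le_sum {α : Type*} [LinearOrder α] [LocallyFiniteOrderBot α]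
    {g : α → ℝ} (hg : Monotone g) (i : α) {B : Finset α} (hB : #B = #(Iic i)) :
    ∑ l ∈ Iic i, g l ≤ ∑ l ∈ B, g l := by
  refine sum_sdiff_le_sum_sdiff.1 ?_
  calc ∑ l ∈ Iic i \ B, g l ≤ #(Iic i \ B) • g i :=
        sum_le_card_nsmul _ _ _ fun l hl => hg (mem_Iic.1 (mem_sdiff.1 hl).1)
    _ = #(B \ Iic i) • g i := by rw [card_sdiff_comm hB.symm]
    _ ≤ ∑ l ∈ B \ Iic i, g l :=
        card_nsmul_le_sum _ _ _ fun l hl => hg (not_le.1 (mt mem_Iic.2 (mem_sdiff.1 hl).2)).le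

section SortedComp

variable {n : ℕ}

theorem sortedComp_mono (x : Fin n → ℝ) : Monotone (sortedComp x) :=
  Tuple.monotone_sort x

theorem card_filter_lt_eq_card_filter_sortedComp_lt (x : Fin n → ℝ) (c : ℝ) :
    #{j | x j < c} = #{l | sortedComp x l < c} :=
  card_equiv (Tuple.sort x).symm fun j => by
    rw [mem_filter, mem_filter]; simp [sortedComp]

theorem le_sortedComp_iff (x : Fin n → ℝ) (i : Fin n) (c : ℝ) :
    c ≤ sortedComp x i ↔ #{j | x j < c} ≤ i := by
  rw [card_filter_lt_eq_card_filter_sortedComp_lt]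
  constructor
  · intro hc
    calc #{l | sortedComp x l < c} ≤ #(Iio i) := card_le_card fun l hl =>
          mem_Iio.2 ((sortedComp_mono x).reflect_lt ((mem_filter.1 hl).2.trans_le hc))
      _ = i := Fin.card_Iio i
  · intro hcard
    by_contra! hc
    have : #(Iic i) ≤ #{l | sortedComp x l < c} := card_le_card fun l hl =>
      mem_filter.2 ⟨mem_univ l, (sortedComp_mono x (mem_Iic.1 hl)).trans_lt hc⟩
    rw [Fin.card_Iic] at this
    omega

theorem sortedComp_le_add {x y : Fin n → ℝ} {r : ℝ} (h : ∀ j, x j ≤ y j + r) (i : Fin n) :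
    sortedComp x i ≤ sortedComp y i + r := by
  rw [← sub_le_iff_le_add, le_sortedComp_iff]
  refine le_trans (card_le_card fun j hj => ?_) ((le_sortedComp_iff x i _).1 le_rfl)
  simp only [mem_filter, mem_univ, true_and] at hj ⊢
  linarith [h j]

theorem lipschitzWith_sortedComp (i : Fin n) :
    LipschitzWith 1 fun x : Fin n → ℝ => sortedComp x i :=
  LipschitzWith.of_le_add fun x y => sortedComp_le_add (fun j => by
    linarith [le_abs_self (x j - y j), (Real.dist_eq (x j) (y j)).symm.trans_le
      (dist_le_pi_dist x y j)]) i

theorem abs_sortedComp_sub_le (x y : Fin n → ℝ) (i : Fin n) :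
    |sortedComp x i - sortedComp y i| ≤ ‖x - y‖ := by
  simpa [Real.dist_eq, dist_eq_norm] using (lipschitzWith_sortedComp i).dist_le_mul x y

theorem card_filter_lt_sortedComp_eq {u w : Fin n → ℝ} {i : Fin n}
    (h : ∀ l ≤ i, sortedComp w l = sortedComp u l) :
    #{j | w j < sortedComp u i} = #{j | u j < sortedComp u i} := by
  rw [card_filter_lt_eq_card_filter_sortedComp_lt w, card_filter_lt_eq_card_filter_sortedComp_lt u]
  congr 1
  refine filter_congr fun l _ => ?_
  rcases le_or_gt l i with hl | hl
  · rw [h l hl]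
  · have hw := (h i le_rfl) ▸ sortedComp_mono w hl.le
    simp only [not_lt.2 hw, not_lt.2 (sortedComp_mono u hl.le)]

theorem sortedComp_add_le_sortedComp_add {u w d : Fin n → ℝ} {i : Fin n} {r : ℝ}
    (hpre : ∀ l ≤ i, sortedComp w l = sortedComp u l)
    (habove : ∀ j, sortedComp u i < w j → sortedComp u i + 2 * r ≤ w j)
    (heq : ∀ j, w j = sortedComp u i → u j = sortedComp u i)
    (hbelow : ∀ j, u j < sortedComp u i → u j + 2 * r < sortedComp u i)
    (hd : ∀ j, |d j| ≤ r) :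
    sortedComp (u + d) i ≤ sortedComp (w + d) i := by
  set θ := sortedComp u i
  set c := sortedComp (u + d) i
  have hc : c ≤ θ + r := sortedComp_le_add (fun j => by simp [(abs_le.1 (hd j)).2]) i
  have hc' : θ ≤ c + r := sortedComp_le_add (fun j => by simp; linarith [(abs_le.1 (hd j)).1]) i
  set B : Finset (Fin n) := {j | w j = θ ∧ (u + d) j < c}
  rw [le_sortedComp_iff]
  calc #{j | (w + d) j < c} ≤ #(({j | w j < θ} : Finset (Fin n)) ∪ B) := by
        refine card_le_card fun j hj => ?_
        simp only [B, mem_union, mem_filter, mem_univ, true_and, Pi.add_apply] at hj ⊢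
        rcases lt_trichotomy (w j) θ with hlt | heq' | hgt
        · exact Or.inl hlt
        · exact Or.inr ⟨heq', by rwa [heq j heq', ← heq']⟩
        · linarith [habove j hgt, (abs_le.1 (hd j)).1]
    _ ≤ #{j | w j < θ} + #B := card_union_le _ _
    _ = #{j | u j < θ} + #B := by rw [card_filter_lt_sortedComp_eq hpre]
    _ = #(({j | u j < θ} : Finset (Fin n)) ∪ B) := by
        refine (card_union_of_disjoint (disjoint_filter.2 fun j _ hu hB => ?_)).symm
        exact hu.ne (heq j hB.1)
    _ ≤ #{j | (u + d) j < c} := by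
        refine card_le_card (union_subset (fun j hj => ?_) (fun j hj => ?_))
        · simp only [mem_filter, mem_univ, true_and, Pi.add_apply] at hj ⊢
          linarith [hbelow j hj, (abs_le.1 (hd j)).2]
        · exact mem_filter.2 ⟨mem_univ j, (mem_filter.1 hj).2.2⟩
    _ ≤ i := (le_sortedComp_iff _ i c).1 le_rfl

theorem sum_Iic_sortedComp_le_sum (x : Fin n → ℝ) (i : Fin n) {A : Finset (Fin n)}
    (hA : #A = i + 1) : ∑ l ∈ Iic i, sortedComp x l ≤ ∑ j ∈ A, x j := by
  have hsum : ∑ j ∈ A, x j = ∑ l ∈ A.map (Tuple.sort x).symm.toEmbedding, sortedComp x l := by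
    simp [sum_map, sortedComp]
  rw [hsum]
  exact (sortedComp_mono x).sum_Iic_le_sum i (by rw [card_map, hA, Fin.card_Iic])

theorem concaveOn_sum_Iic_sortedComp (i : Fin n) :
    ConcaveOn ℝ Set.univ fun x : Fin n → ℝ => ∑ l ∈ Iic i, sortedComp x l := by
  refine ⟨convex_univ, fun x _ y _ a b ha hb _ => ?_⟩
  set z := a • x + b • y
  set A := (Iic i).map (Tuple.sort z).toEmbedding
  have hA : #A = i + 1 := by rw [card_map, Fin.card_Iic]
  calc a • ∑ l ∈ Iic i, sortedComp x l + b • ∑ l ∈ Iic i, sortedComp y l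
      ≤ a * ∑ j ∈ A, x j + b * ∑ j ∈ A, y j := by
        simp only [smul_eq_mul]
        gcongr
        · exact sum_Iic_sortedComp_le_sum x i hA
        · exact sum_Iic_sortedComp_le_sum y i hA
    _ = ∑ l ∈ Iic i, sortedComp z l := by
        simp [A, z, sum_map, sortedComp, sum_add_distrib, mul_sum]

end SortedComp

section LexMax

variable {n : ℕ} {X : Set (Fin n → ℝ)} {xstar : Fin n → ℝ}

theorem IsLexMax.sortedComp_eq_of_le (hstar : IsLexMax X xstar) {y : Fin n → ℝ} (hy : y ∈ X)
    {k : Fin n} (hpre : ∀ i < k, sortedComp y i = sortedComp xstar i)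
    (hk : sortedComp xstar k ≤ sortedComp y k) : sortedComp y k = sortedComp xstar k := by
  rcases hstar.2 y hy with rfl | ⟨i, hi, hlt⟩
  · rfl
  rcases lt_trichotomy i k with hik | rfl | hki
  · exact absurd (hpre i hik) hlt.ne
  · exact absurd hk (not_le.2 hlt)
  · exact (hi k hki).symm

theorem IsLexMax.convex_setOf_sortedComp_eq (hX : Convex ℝ X) (hstar : IsLexMax X xstar)
    (k : Fin n) : Convex ℝ {y | y ∈ X ∧ ∀ i < k, sortedComp y i = sortedComp xstar i} := by
  rintro y₁ ⟨hy₁, h₁⟩ y₂ ⟨hy₂, h₂⟩ a b ha hb hab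
  have hz := hX hy₁ hy₂ ha hb hab
  refine ⟨hz, fun i => ?_⟩
  induction i using WellFoundedLT.induction with
  | _ i ih =>
  intro hik
  refine hstar.sortedComp_eq_of_le hz (fun l hl => ih l hl (hl.trans hik)) ?_
  have hsplit : ∀ y : Fin n → ℝ,
      ∑ l ∈ Iic i, sortedComp y l = sortedComp y i + ∑ l ∈ Iio i, sortedComp y l := fun y => by
    rw [← Iio_insert, sum_insert (by simp)]
  have hprefix : ∀ y : Fin n → ℝ, (∀ l < i, sortedComp y l = sortedComp xstar l) →
      ∑ l ∈ Iio i, sortedComp y l = ∑ l ∈ Iio i, sortedComp xstar l := fun y hy =>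
    sum_congr rfl fun l hl => hy l (mem_Iio.1 hl)
  have hconc := (concaveOn_sum_Iic_sortedComp i).2 (Set.mem_univ y₁) (Set.mem_univ y₂) ha hb hab
  simp only [smul_eq_mul, hsplit, hprefix y₁ fun l hl => h₁ l (hl.trans hik),
    hprefix y₂ fun l hl => h₂ l (hl.trans hik), h₁ i hik, h₂ i hik,
    hprefix _ fun l hl => ih l hl (hl.trans hik)] at hconc
  have hab' : ∀ s : ℝ, a * s + b * s = s := fun s => by rw [← add_mul, hab, one_mul]
  linarith [hab' (sortedComp xstar i + ∑ l ∈ Iio i, sortedComp xstar l)]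

end LexMax

section Separation

variable {V : Set ℝ} {Δ τ a b θ : ℝ}

theorem eq_of_add_mul_sub_eq (hV : ∀ s ∈ V, ∀ t ∈ V, s < t → s + Δ ≤ t) (ha : a ∈ V)
    (hθ : θ ∈ V) (hτ : 0 < τ) (hab : τ * |b - a| < Δ / 2) (h : a + τ * (b - a) = θ) :
    b = θ := by
  have hw := abs_lt.1 (show |τ * (b - a)| < Δ / 2 by rwa [abs_mul, abs_of_pos hτ])
  rcases lt_trichotomy a θ with hlt | rfl | hgt
  · linarith [hV a ha θ hθ hlt]
  · linarith [(mul_eq_zero.1 (by linarith : τ * (b - a) = 0)).resolve_left hτ.ne']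
  · linarith [hV θ hθ a ha hgt]

theorem le_add_mul_sub_of_lt (hV : ∀ s ∈ V, ∀ t ∈ V, s < t → s + Δ ≤ t) (ha : a ∈ V)
    (hb : b ∈ V) (hθ : θ ∈ V) (hτ : 0 < τ) (hτ' : τ ≤ 1 / 2) (hab : τ * |b - a| < Δ / 2)
    (h : θ < a + τ * (b - a)) : θ + τ * Δ ≤ a + τ * (b - a) := by
  have hw := abs_lt.1 (show |τ * (b - a)| < Δ / 2 by rwa [abs_mul, abs_of_pos hτ])
  rcases lt_trichotomy a θ with hlt | rfl | hgt
  · linarith [hV a ha θ hθ hlt]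
  · have hab : a < b := by nlinarith
    nlinarith [hV a hθ b hb hab]
  · nlinarith [hV θ hθ a ha hgt]

theorem sortedComp_add_le_sortedComp_add_smul_sub {n : ℕ} {u x d : Fin n → ℝ} {i : Fin n}
    (hgap : ∀ s ∈ Set.range u ∪ Set.range x, ∀ t ∈ Set.range u ∪ Set.range x, s < t → s + Δ ≤ t)
    (hτ : 0 < τ) (hτ' : τ ≤ 1 / 2) (hux : τ * ‖u - x‖ < Δ / 2)
    (hpre : ∀ l ≤ i, sortedComp (x + τ • (u - x)) l = sortedComp u l)
    (hθ : sortedComp u i ∈ Set.range x) (hd : ‖d‖ ≤ τ * Δ / 2) :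
    sortedComp (u + d) i ≤ sortedComp (x + τ • (u - x) + d) i := by
  have hθ' : sortedComp u i ∈ Set.range u ∪ Set.range x := Or.inr hθ
  have hcoord : ∀ j, τ * |u j - x j| < Δ / 2 := fun j =>
    (mul_le_mul_of_nonneg_left (norm_le_pi_norm (u - x) j) hτ.le).trans_lt hux
  have hwj : ∀ j, (x + τ • (u - x)) j = x j + τ * (u j - x j) := fun j => by simp
  refine sortedComp_add_le_sortedComp_add (r := τ * Δ / 2) hpre (fun j h => ?_) (fun j h => ?_)
    (fun j h => ?_) fun j => (norm_le_pi_norm d j).trans hd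
  · rw [hwj] at h ⊢
    linarith [le_add_mul_sub_of_lt hgap (Or.inr ⟨j, rfl⟩) (Or.inl ⟨j, rfl⟩) hθ' hτ hτ'
      (hcoord j) h]
  · exact eq_of_add_mul_sub_eq hgap (Or.inr ⟨j, rfl⟩) hθ' hτ (hcoord j) (hwj j ▸ h)
  · nlinarith [hgap (u j) (Or.inl ⟨j, rfl⟩) _ hθ' h]

end Separation

section Hfun

variable {n : ℕ} {X : Set (Fin n → ℝ)} {k : Fin n}

theorem Hfun_congr {y y' : Fin n → ℝ} (h : ∀ i < k, sortedComp y i = sortedComp y' i) :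
    Hfun X k y = Hfun X k y' := by
  simp +contextual [Hfun, h]

theorem sortedComp_le_Hfun (hX : IsCompact X) {y z : Fin n → ℝ} (hz : z ∈ X)
    (hzy : ∀ i < k, sortedComp y i ≤ sortedComp z i) : sortedComp z k ≤ Hfun X k y := by
  refine le_csSup ((hX.bddAbove_image (lipschitzWith_sortedComp k).continuous.continuousOn).mono ?_)
    ⟨z, hz, hzy, rfl⟩
  rintro _ ⟨z, hz, -, rfl⟩
  exact ⟨z, hz, rfl⟩

/-- The witness for `v` near `u` is `v + (1 - τ) • (xstar - u) = w + (v - u)` with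
`w = xstar + τ • (u - xstar)`. It lies in `X` because polytopes are locally conic, and it is
feasible because `w` keeps the order statistics of `u` below `k` (they form a convex set) while
its coordinates stay well separated from each threshold `σ_i u`. -/
theorem IsLexMax.eventually_sub_lt_Hfun {S : Finset (Fin n → ℝ)}
    (hX : X = convexHull ℝ (S : Set (Fin n → ℝ))) {xstar : Fin n → ℝ} (hstar : IsLexMax X xstar)
    {u : Fin n → ℝ} (hu : u ∈ X) (hpre : ∀ i < k, sortedComp u i = sortedComp xstar i)
    {ρ : ℝ} (hρ : 0 < ρ) : ∀ᶠ v in 𝓝[X] u, sortedComp xstar k - ρ < Hfun X k v := by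
  have hXc : IsCompact X := hX ▸ S.finite_toSet.isCompact_convexHull ℝ
  obtain ⟨Δ, hΔ, hgap⟩ :=
    ((Set.finite_range u).union (Set.finite_range xstar)).exists_pos_add_le_of_lt
  have hsmall : ∀ᶠ τ in 𝓝[>] (0 : ℝ), τ ≤ 1 / 2 ∧ τ * ‖u - xstar‖ < min (Δ / 2) (ρ / 2) := by
    have h : Tendsto (fun τ : ℝ => τ * ‖u - xstar‖) (𝓝 0) (𝓝 0) :=
      (continuous_mul_const _).tendsto' 0 0 (zero_mul _)
    exact nhdsWithin_le_nhds ((eventually_le_nhds (by norm_num)).and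
      (h.eventually (gt_mem_nhds (by positivity))))
  obtain ⟨τ, ⟨hτ', hτ⟩, hτ₀ : 0 < τ⟩ := (hsmall.and self_mem_nhdsWithin).exists
  set w := xstar + τ • (u - xstar)
  have hw : ∀ i < k, sortedComp w i = sortedComp xstar i :=
    ((hstar.convex_setOf_sortedComp_eq (hX ▸ convex_convexHull ℝ _) k).add_smul_sub_mem
      ⟨hstar.1, fun _ _ => rfl⟩ ⟨hu, hpre⟩ ⟨hτ₀.le, by linarith⟩).2
  have hconic : ∀ᶠ v in 𝓝[X] u, v + (1 - τ) • (xstar - u) ∈ X := by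
    subst hX
    exact eventually_add_smul_sub_mem_convexHull S hstar.1 (by linarith) (by linarith)
  have hnear : ∀ᶠ v in 𝓝[X] u, ‖v - u‖ < min (τ * Δ / 2) (ρ / 2) := by
    filter_upwards [nhdsWithin_le_nhds (Metric.ball_mem_nhds u
      (lt_min (by positivity : 0 < τ * Δ / 2) (by positivity : 0 < ρ / 2)))] with v hv
    rwa [Metric.mem_ball, dist_eq_norm] at hv
  filter_upwards [hconic, hnear] with v hvX hvu
  obtain ⟨d, rfl⟩ : ∃ d, v = u + d := ⟨v - u, by abel⟩
  have hz : u + d + (1 - τ) • (xstar - u) = w + d := by simp only [w]; module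
  simp only [add_sub_cancel_left] at hvu
  rw [hz] at hvX
  refine lt_of_lt_of_le ?_ (sortedComp_le_Hfun hXc hvX fun i hi =>
    sortedComp_add_le_sortedComp_add_smul_sub hgap hτ₀ hτ' (hτ.trans_le (min_le_left _ _))
      (fun l hl => (hw l (hl.trans_lt hi)).trans (hpre l (hl.trans_lt hi)).symm)
      ⟨Tuple.sort xstar i, (hpre i hi).symm⟩ (hvu.le.trans (min_le_left _ _)))
  have hnorm : ‖xstar - (w + d)‖ ≤ τ * ‖u - xstar‖ + ‖d‖ :=
    calc ‖xstar - (w + d)‖ = ‖τ • (u - xstar) + d‖ := by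
          rw [← norm_neg]; simp only [w]; congr 1; abel
      _ ≤ τ * ‖u - xstar‖ + ‖d‖ :=
          (norm_add_le _ _).trans_eq (by rw [norm_smul, Real.norm_of_nonneg hτ₀.le])
  linarith [le_abs_self (sortedComp xstar k - sortedComp (w + d) k),
    abs_sortedComp_sub_le xstar (w + d) k, hτ.trans_le (min_le_right _ _),
    hvu.trans_le (min_le_right _ _)]

end Hfun

section Runs

variable {n : ℕ} {X : Set (Fin n → ℝ)}

/-- `seq k` is the iterate `x^(k)` of progressive filling on `(X, ε)`; the starting point `seq 0`
is unconstrained. -/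
def IsFillingRun (X : Set (Fin n → ℝ)) (ε : ℝ) (seq : Fin (n + 1) → Fin n → ℝ) : Prop :=
  ∀ k : Fin n,
    seq k.succ ∈ X ∧
    (∀ i : Fin n, i < k → sortedComp (seq k.castSucc) i ≤ sortedComp (seq k.succ) i) ∧
    Hfun X k (seq k.castSucc) - ε ≤ sortedComp (seq k.succ) k

theorem IsFillingRun.update_zero {ε : ℝ} {seq : Fin (n + 1) → Fin n → ℝ}
    (h : IsFillingRun X ε seq) (x₀ : Fin n → ℝ) :
    IsFillingRun X ε (Function.update seq 0 x₀) := by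
  intro k
  obtain ⟨hX, hmono, hopt⟩ := h k
  have hprev : ∀ i < k, Function.update seq 0 x₀ k.castSucc = seq k.castSucc := fun i hi =>
    Function.update_of_ne (Fin.castSucc_ne_zero_of_lt hi) _ _
  rw [Function.update_of_ne (Fin.succ_ne_zero k)]
  refine ⟨hX, fun i hi => hprev i hi ▸ hmono i hi, ?_⟩
  rwa [Hfun_congr fun i hi => by rw [hprev i hi]]

theorem IsLexMax.sortedComp_eq_of_steps {xstar : Fin n → ℝ} (hstar : IsLexMax X xstar)
    {y : Fin (n + 1) → Fin n → ℝ} (hyX : ∀ j, y j ∈ X)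
    (hmono : ∀ k : Fin n, ∀ i < k, sortedComp (y k.castSucc) i ≤ sortedComp (y k.succ) i)
    (hopt : ∀ k : Fin n, (∀ i < k, sortedComp (y k.castSucc) i = sortedComp xstar i) →
      sortedComp xstar k ≤ sortedComp (y k.succ) k)
    (k : Fin n) {j : Fin (n + 1)} (hj : k.succ ≤ j) : sortedComp (y j) k = sortedComp xstar k := by
  induction k using WellFoundedLT.induction generalizing j with
  | _ k ih =>
  have hlow : ∀ j : Fin (n + 1), k.succ ≤ j → sortedComp xstar k ≤ sortedComp (y j) k := by
    intro j
    induction j using Fin.induction with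
    | zero => exact fun h => absurd h (not_le.2 k.succ_pos)
    | succ l hl =>
      intro h
      rcases (Fin.succ_le_succ_iff.1 h).lt_or_eq with hkl | rfl
      · exact (hl (Fin.succ_le_castSucc_iff.2 hkl)).trans (hmono l k hkl)
      · exact hopt k fun i hi => ih i hi (Fin.succ_le_castSucc_iff.2 hi)
  exact hstar.sortedComp_eq_of_le (hyX j)
    (fun i hi => ih i hi ((Fin.succ_le_succ_iff.2 hi.le).trans hj)) (hlow j hj)

theorem IsLexMax.tendsto_sortedComp_of_isFillingRun {S : Finset (Fin n → ℝ)}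
    (hX : X = convexHull ℝ (S : Set (Fin n → ℝ))) {xstar : Fin n → ℝ} (hstar : IsLexMax X xstar)
    {ι : Type*} {l : Filter ι} {ε : ι → ℝ} (hε : Tendsto ε l (𝓝 0))
    {seq : ι → Fin (n + 1) → Fin n → ℝ} (hrun : ∀ m, IsFillingRun X (ε m) (seq m))
    (k : Fin n) {j : Fin (n + 1)} (hj : k.succ ≤ j) :
    Tendsto (fun m => sortedComp (seq m j) k) l (𝓝 (sortedComp xstar k)) := by
  have hXc : IsCompact X := hX ▸ S.finite_toSet.isCompact_convexHull ℝ
  set seq' := fun m => Function.update (seq m) 0 xstar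
  have hrun' : ∀ m, IsFillingRun X (ε m) (seq' m) := fun m => (hrun m).update_zero xstar
  have hmem : ∀ m j, seq' m j ∈ X := fun m j =>
    Fin.cases (by simp [seq', hstar.1]) (fun k => (hrun' m k).1) j
  have hj' : ∀ m, seq' m j = seq m j := fun m =>
    Function.update_of_ne (k.succ_pos.trans_le hj).ne' _ _
  simp only [← hj']
  rw [tendsto_iff_ultrafilter]
  intro U hU
  choose y hyX hy using fun j => hXc.exists_tendsto_ultrafilter U (.of_forall (hmem · j))
  have hσ : ∀ j i, Tendsto (fun m => sortedComp (seq' m j) i) U (𝓝 (sortedComp (y j) i)) :=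
    fun j i => ((lipschitzWith_sortedComp i).continuous.tendsto _).comp (hy j)
  refine hstar.sortedComp_eq_of_steps hyX (fun k i hi => ?_) (fun k hpre => ?_) k hj ▸ hσ j k
  · exact le_of_tendsto_of_tendsto' (hσ _ i) (hσ _ i) fun m => (hrun' m k).2.1 i hi
  · refine le_of_forall_pos_le_add fun ρ hρ => ?_
    have hnear : Tendsto (seq' · k.castSucc) U (𝓝[X] (y k.castSucc)) :=
      tendsto_nhdsWithin_iff.2 ⟨hy _, .of_forall (hmem · _)⟩
    have hlow : ∀ᶠ m in U, sortedComp xstar k - ρ ≤ sortedComp (seq' m k.succ) k + ε m := by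
      filter_upwards [hnear.eventually (hstar.eventually_sub_lt_Hfun hX (hyX _) hpre hρ)]
        with m hm
      linarith [(hrun' m k).2.2]
    have := ge_of_tendsto ((hσ k.succ k).add (hε.mono_left hU)) hlow
    linarith

end Runs

theorem convex_polytope_lex_stable_general {n : ℕ} (X : Set (Fin n → ℝ))
    (S : Finset (Fin n → ℝ)) (hX : X = convexHull ℝ (S : Set (Fin n → ℝ)))
    (xstar : Fin n → ℝ) (hstar : IsLexMax X xstar) :
    ∀ δ > 0, ∃ ε > 0, ∀ xhat, PossibleOutput X ε xhat →
      ∀ k : Fin n, sortedComp xstar k - sortedComp xhat k < δ := by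
  intro δ hδ
  by_contra! hbad
  choose xhat hout k hk using fun m : ℕ => hbad (1 / ((m : ℝ) + 1)) Nat.one_div_pos_of_nat
  choose seq hlast hrun using hout
  have hlim : ∀ i, Tendsto (fun m => sortedComp (seq m (Fin.last n)) i) atTop
      (𝓝 (sortedComp xstar i)) := fun i =>
    hstar.tendsto_sortedComp_of_isFillingRun hX tendsto_one_div_add_atTop_nhds_zero_nat hrun i
      (Fin.le_last _)
  obtain ⟨m, hm⟩ := (eventually_all.2 fun i =>
    (hlim i).eventually (lt_mem_nhds (sub_lt_self (sortedComp xstar i) hδ))).exists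
  linarith [hlast m ▸ hm (k m), hk m]

theorem convex_polytope_lex_stable {n : ℕ} (X : Set (Fin n → ℝ))
    (S : Finset (Fin n → ℝ)) (hS : S.Nonempty) (hX : X = convexHull ℝ (S : Set (Fin n → ℝ)))
    (xstar : Fin n → ℝ) (hstar : IsLexMax X xstar) :
    ∀ δ > 0, ∃ ε > 0, ∀ xhat, PossibleOutput X ε xhat →
      ∀ k : Fin n, sortedComp xstar k - sortedComp xhat k < δ :=
  convex_polytope_lex_stable_general X S hX xstar hstar
end

section
/- Let Z = [−1,0] × [0,1] × [0,1] ⊆ ℝ^3 and X = { x ∈ Z : x_1(x_3 − 1) ≥ x_2^2 }. Then X is compact and convex, and its unique lexicographic maximum is (0, 0, 1). -/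
section Sorted

variable {n : ℕ}

theorem sortedComp_eq_self_of_monotone {x : Fin n → ℝ} (h : Monotone x) : sortedComp x = x := by
  funext k
  simp [sortedComp, Tuple.sort_eq_refl_iff_monotone.2 h]

theorem sortedComp_zero_le (x : Fin (n + 1) → ℝ) (j : Fin (n + 1)) : sortedComp x 0 ≤ x j := by
  simpa [sortedComp] using Tuple.monotone_sort x (Fin.zero_le ((Tuple.sort x)⁻¹ j))

theorem IsLexMax.eq {X : Set (Fin n → ℝ)} {y z : Fin n → ℝ} (hy : IsLexMax X y)
    (hz : IsLexMax X z) : y = z := by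
  rcases hz.2 y hy.1 with h | ⟨i, hi_eq, hi_lt⟩
  · exact h
  rcases hy.2 z hz.1 with h | ⟨k, hk_eq, hk_lt⟩
  · exact h.symm
  rcases lt_trichotomy i k with h | rfl | h
  · linarith [hk_eq i h]
  · linarith
  · linarith [hi_eq k h]

end Sorted

theorem sq_add_le_mul_of_sq_le_mul {a b u v p q : ℝ} (hu : 0 ≤ u) (hv : 0 ≤ v) (hp : 0 ≤ p)
    (hq : 0 ≤ q) (ha : a ^ 2 ≤ u * p) (hb : b ^ 2 ≤ v * q) {s t : ℝ} (hs : 0 ≤ s) (ht : 0 ≤ t) :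
    (s * a + t * b) ^ 2 ≤ (s * u + t * v) * (s * p + t * q) := by
  have hab : 2 * (a * b) ≤ u * q + v * p :=
    two_mul_le_add_of_sq_le_mul (mul_nonneg hu hq) (mul_nonneg hv hp) <| by
      nlinarith [mul_le_mul ha hb (sq_nonneg b) (mul_nonneg hu hp)]
  nlinarith [mul_le_mul_of_nonneg_left ha (sq_nonneg s), mul_le_mul_of_nonneg_left hb (sq_nonneg t),
    mul_le_mul_of_nonneg_left hab (mul_nonneg hs ht)]

def exampleSet : Set (Fin 3 → ℝ) :=
  {x | x 0 ∈ Set.Icc (-1 : ℝ) 0 ∧ x 1 ∈ Set.Icc (0 : ℝ) 1 ∧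
    x 2 ∈ Set.Icc (0 : ℝ) 1 ∧ (x 1) ^ 2 ≤ x 0 * (x 2 - 1)}

theorem isClosed_exampleSet : IsClosed exampleSet := by
  simp only [exampleSet, Set.ofPred_and]
  exact (isClosed_Icc.preimage (continuous_apply 0)).inter
    ((isClosed_Icc.preimage (continuous_apply 1)).inter
      ((isClosed_Icc.preimage (continuous_apply 2)).inter
        (isClosed_le (by fun_prop) (by fun_prop))))

theorem isCompact_exampleSet : IsCompact exampleSet := by
  refine isCompact_Icc.of_isClosed_subset isClosed_exampleSet
    (s := Set.Icc ![-1, 0, 0] ![0, 1, 1]) fun x ⟨⟨h0, h0'⟩, ⟨h1, h1'⟩, ⟨h2, h2'⟩, _⟩ => ?_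
  constructor <;> intro i <;> fin_cases i <;> simpa

theorem convex_exampleSet : Convex ℝ exampleSet := by
  intro x ⟨hx0, hx1, hx2, hx⟩ y ⟨hy0, hy1, hy2, hy⟩ s t hs ht hst
  refine ⟨convex_Icc _ _ hx0 hy0 hs ht hst, convex_Icc _ _ hx1 hy1 hs ht hst,
    convex_Icc _ _ hx2 hy2 hs ht hst, ?_⟩
  have hcone := sq_add_le_mul_of_sq_le_mul (a := x 1) (b := y 1) (neg_nonneg.2 hx0.2)
    (neg_nonneg.2 hy0.2) (sub_nonneg.2 hx2.2) (sub_nonneg.2 hy2.2) (by linarith) (by linarith) hs ht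
  simp only [Pi.add_apply, Pi.smul_apply, smul_eq_mul]
  linear_combination hcone - (s * x 0 + t * y 0) * hst

theorem isLexMax_exampleSet : IsLexMax exampleSet ![0, 0, 1] := by
  have hsort : sortedComp ![(0 : ℝ), 0, 1] = ![0, 0, 1] :=
    sortedComp_eq_self_of_monotone
      (Fin.monotone_iff_le_succ.2 (by simp [Fin.forall_fin_two]))
  refine ⟨by simp [exampleSet], fun x ⟨⟨_, hx0⟩, _, ⟨hx2, hx2'⟩, hx⟩ => ?_⟩
  rcases hx0.lt_or_eq with hx0 | hx0
  · exact .inr ⟨0, fun j hj => absurd hj (Fin.not_lt_zero j), by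
      rw [hsort]; simpa using (sortedComp_zero_le x 0).trans_lt hx0⟩
  have hx1 : x 1 = 0 := by nlinarith
  have hsx : sortedComp x = x := sortedComp_eq_self_of_monotone
    (Fin.monotone_iff_le_succ.2 (by simpa [Fin.forall_fin_two, hx0, hx1] using hx2))
  rcases hx2'.lt_or_eq with hx2' | hx2'
  · refine .inr ⟨2, fun j hj => ?_, by simpa [hsort, hsx] using hx2'⟩
    fin_cases j <;> simp_all
  · exact .inl (funext fun j => by fin_cases j <;> simp [hx0, hx1, hx2'])

theorem compact_convex_example_lexmax :
    let X : Set (Fin 3 → ℝ) := {x | x 0 ∈ Set.Icc (-1 : ℝ) 0 ∧ x 1 ∈ Set.Icc (0 : ℝ) 1 ∧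
      x 2 ∈ Set.Icc (0 : ℝ) 1 ∧ (x 1) ^ 2 ≤ x 0 * (x 2 - 1)}
    IsCompact X ∧ Convex ℝ X ∧ IsLexMax X ![0, 0, 1] ∧
      ∀ y, IsLexMax X y → y = ![0, 0, 1] :=
  ⟨isCompact_exampleSet, convex_exampleSet, isLexMax_exampleSet,
    fun _ hy => hy.eq isLexMax_exampleSet⟩
end

section
/- For all n ≥ k ≥ 3 and a ≥ 1, there exists a line segment X ⊆ ℝ^n with ‖X‖_∞ = 1 such that for every c > 0 the exact exponential-loss minimizer x_{c,0} over X satisfies σ_k(x*) − σ_k(x_{c,0}) ≥ (1/3)·min{1, a/c}, where x* is the lexicographic maximum of X. -/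
/-- The exponential loss. -/
noncomputable def expLoss {n : ℕ} (c : ℝ) (x : Fin n → ℝ) : ℝ :=
  ∑ i, Real.exp (-c * x i)

/-- The sup of the sup-norms of elements of X, i.e. ‖X‖_∞. -/
noncomputable def supNorm {n : ℕ} (X : Set (Fin n → ℝ)) : ℝ :=
  sSup ((fun x : Fin n → ℝ => ‖x‖) '' X)

/-!
Along the segment `x_t = (1 - t) x* + t x'` only three coordinates move: the smallest falls from
`ε` to `0`, the `(k-1)`-st rises from `ε` to `2/3` and the `k`-th falls from `1` to `2/3`. Every
`x_t` stays sorted, so `x*` is the lexicographic maximum and `σ_k(x_t) = 1 - t/3`. The loss along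
the segment has slope
`c (ε e^{-c(1-t)ε} - (2/3 - ε) e^{-c(ε + t(2/3 - ε))} + (1/3) e^{-c(1 - t/3)})`;
comparing both outer exponentials with the middle one, the choice `ε = e^{-2a/3}/8` makes it
negative while `t ≤ 1` and `c t ≤ a`. Hence the minimiser has `t ≥ min(1, a/c)`.
-/

open Real Set AffineMap

lemma sortedComp_of_monotone {n : ℕ} {x : Fin n → ℝ} (h : Monotone x) (j : Fin n) :
    sortedComp x j = x j := by
  rw [sortedComp, Tuple.sort_eq_refl_iff_monotone.2 h, Equiv.refl_apply]

lemma IsLexMax.eq_of_forall_sortedComp_zero_lt {n : ℕ} (hn : 0 < n) {X : Set (Fin n → ℝ)}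
    {y z : Fin n → ℝ} (hy : IsLexMax X y) (hz : z ∈ X)
    (hlt : ∀ x ∈ X, x ≠ z → sortedComp x ⟨0, hn⟩ < sortedComp z ⟨0, hn⟩) : y = z := by
  by_contra hyz
  have hy0 := hlt y hy.1 hyz
  rcases hy.2 z hz with hzy | ⟨i, hbefore, hi⟩
  · exact hyz hzy.symm
  · rcases (Nat.eq_zero_or_pos i).symm with hi0 | hi0
    · exact hy0.ne (hbefore ⟨0, hn⟩ hi0)
    · obtain rfl : i = ⟨0, hn⟩ := Fin.ext hi0
      exact hy0.not_gt hi

lemma monotone_of_mem_segment {ι : Type*} [Preorder ι] {x y z : ι → ℝ} (hx : Monotone x)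
    (hy : Monotone y) (hz : z ∈ segment ℝ x y) : Monotone z := by
  obtain ⟨a, b, ha, hb, -, rfl⟩ := hz
  intro i j hij
  simp only [Pi.add_apply, Pi.smul_apply, smul_eq_mul]
  gcongr
  exacts [hx hij, hy hij]

lemma supNorm_eq_of_isGreatest {n : ℕ} {X : Set (Fin n → ℝ)} {r : ℝ} {x₀ : Fin n → ℝ}
    (hx₀ : x₀ ∈ X) (hr : ‖x₀‖ = r) (hX : ∀ x ∈ X, ‖x‖ ≤ r) : supNorm X = r :=
  IsGreatest.csSup_eq ⟨⟨x₀, hx₀, hr⟩, by rintro _ ⟨x, hx, rfl⟩; exact hX x hx⟩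

lemma hasDerivAt_expLoss_lineMap {n : ℕ} (c : ℝ) (x y : Fin n → ℝ) (t : ℝ) :
    HasDerivAt (fun s => expLoss c (lineMap x y s))
      (-c * ∑ i, (y i - x i) * exp (-c * lineMap x y t i)) t := by
  simp only [expLoss, pi_lineMap_apply, lineMap_apply_ring', Finset.mul_sum]
  refine HasDerivAt.fun_sum fun i _ => ?_
  have hlin : HasDerivAt (fun s => -c * (s * (y i - x i) + x i)) (-c * (y i - x i)) t := by
    simpa using (((hasDerivAt_id t).mul_const (y i - x i)).add_const (x i)).const_mul (-c)
  exact hlin.exp.congr_deriv (by ring)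

lemma le_of_strictAntiOn_Icc_of_le {f : ℝ → ℝ} {a m t : ℝ} (hf : StrictAntiOn f (Icc a m))
    (ham : a ≤ m) (hat : a ≤ t) (hmin : f t ≤ f m) : m ≤ t := by
  by_contra! htm
  exact (hf ⟨hat, htm.le⟩ ⟨ham, le_rfl⟩ htm).not_ge hmin

section Construction

variable {n : ℕ} (k : ℕ) (ε : ℝ)

-- Coordinates are 0-indexed: the paper's coordinates `k - 1` and `k` are `k - 2` and `k - 1` here.
noncomputable def xStar : Fin n → ℝ := fun i => if (i : ℕ) < k - 1 then ε else 1

noncomputable def xPrime : Fin n → ℝ := fun i =>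
  if (i : ℕ) = 0 then 0 else if (i : ℕ) < k - 2 then ε else if (i : ℕ) < k then 2 / 3 else 1

variable {k ε}

lemma xStar_monotone (hε : ε ≤ 1) : Monotone (xStar (n := n) k ε) := by
  intro i j hij
  rw [Fin.le_def] at hij
  simp only [xStar]
  split_ifs <;> first | (exfalso; omega) | linarith

lemma xPrime_monotone (hε₀ : 0 ≤ ε) (hε : ε ≤ 2 / 3) : Monotone (xPrime (n := n) k ε) := by
  intro i j hij
  rw [Fin.le_def] at hij
  simp only [xPrime]
  split_ifs <;> first | (exfalso; omega) | linarith

lemma norm_xStar (hk : 0 < k) (hkn : k ≤ n) (hε₀ : 0 ≤ ε) (hε : ε ≤ 1) :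
    ‖xStar (n := n) k ε‖ = 1 := by
  refine le_antisymm ((pi_norm_le_iff_of_nonneg zero_le_one).2 fun i => ?_) ?_
  · rw [Real.norm_eq_abs, abs_le]
    simp only [xStar]
    split_ifs <;> constructor <;> linarith
  · simpa [xStar] using norm_le_pi_norm (xStar k ε) ⟨k - 1, Nat.sub_one_lt_of_le hk hkn⟩

lemma norm_xPrime_le (hε₀ : 0 ≤ ε) (hε : ε ≤ 1) : ‖xPrime (n := n) k ε‖ ≤ 1 := by
  refine (pi_norm_le_iff_of_nonneg zero_le_one).2 fun i => ?_
  rw [Real.norm_eq_abs, abs_le]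
  simp only [xPrime]
  split_ifs <;> constructor <;> linarith

lemma xPrime_sub_xStar (hk : 3 ≤ k) (hkn : k ≤ n) :
    xPrime k ε - xStar k ε = Pi.single (⟨0, by omega⟩ : Fin n) (-ε)
      + Pi.single ⟨k - 2, by omega⟩ (2 / 3 - ε)
      + Pi.single ⟨k - 1, Nat.sub_one_lt_of_le (by omega) hkn⟩ (-1 / 3) := by
  ext i
  simp only [xPrime, xStar, Pi.add_apply, Pi.sub_apply, Pi.single_apply, Fin.ext_iff]
  split_ifs <;> first | (exfalso; omega) | ring

noncomputable def segmentSlope (c ε t : ℝ) : ℝ :=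
  ε * exp (-c * ((1 - t) * ε)) - (2 / 3 - ε) * exp (-c * (ε + t * (2 / 3 - ε)))
    + 1 / 3 * exp (-c * (1 - t / 3))

lemma hasDerivAt_expLoss_segment (hk : 3 ≤ k) (hkn : k ≤ n) (c t : ℝ) :
    HasDerivAt (fun s => expLoss c (lineMap (xStar k ε) (xPrime (n := n) k ε) s))
      (c * segmentSlope c ε t) t := by
  refine (hasDerivAt_expLoss_lineMap c _ _ t).congr_deriv ?_
  simp only [← Pi.sub_apply (xPrime k ε), xPrime_sub_xStar hk hkn, Pi.add_apply, add_mul,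
    Finset.sum_add_distrib, Pi.single_apply, ite_mul, zero_mul, Finset.sum_ite_eq',
    Finset.mem_univ, if_true, pi_lineMap_apply, lineMap_apply_ring']
  have h20 : k - 2 ≠ 0 := by omega
  have h10 : k - 1 ≠ 0 := by omega
  have h21 : k - 2 < k - 1 := by omega
  simp only [Fin.ext_iff, h20, h20.symm, h10, h10.symm, h21, h21.ne, h21.ne', ↓reduceIte,
    add_zero, zero_add, mul_neg, neg_mul, xStar, tsub_pos_iff_lt, show 1 < k by omega,
    lt_self_iff_false, segmentSlope, one_div]
  ring_nf

lemma segmentSlope_neg {a c t : ℝ} (hc : 0 ≤ c) (hε₀ : 0 ≤ ε) (hε : ε ≤ 1 / 8)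
    (hεa : ε * exp (2 * a / 3) ≤ 1 / 8) (ht : t ≤ 1) (hct : c * t ≤ a) :
    segmentSlope c ε t < 0 := by
  set E := exp (-c * (ε + t * (2 / 3 - ε)))
  have hE : 0 < E := exp_pos _
  have h₀ : ε * exp (-c * ((1 - t) * ε)) ≤ 1 / 8 * E := by
    have : exp (-c * ((1 - t) * ε)) = exp (2 * (c * t) / 3) * E := by
      rw [← exp_add]; ring_nf
    rw [this, ← mul_assoc]
    gcongr
    exact le_trans (by gcongr) hεa
  have h₁ : exp (-c * (1 - t / 3)) ≤ E := by
    refine exp_le_exp.2 ?_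
    nlinarith [mul_nonneg hc (mul_nonneg (by linarith : (0 : ℝ) ≤ 1 - ε) (by linarith : 0 ≤ 1 - t))]
  simp only [segmentSlope]
  nlinarith

lemma strictAntiOn_expLoss_segment (hk : 3 ≤ k) (hkn : k ≤ n) {a c m : ℝ} (hc : 0 < c)
    (hε₀ : 0 ≤ ε) (hε : ε ≤ 1 / 8) (hεa : ε * exp (2 * a / 3) ≤ 1 / 8) (hm : m ≤ 1)
    (hcm : c * m ≤ a) :
    StrictAntiOn (fun s => expLoss c (lineMap (xStar k ε) (xPrime (n := n) k ε) s))
      (Icc 0 m) := by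
  have hderiv := hasDerivAt_expLoss_segment (ε := ε) hk hkn c
  refine strictAntiOn_of_hasDerivWithinAt_neg (convex_Icc 0 m)
    (fun s _ => (hderiv s).continuousAt.continuousWithinAt) (fun s _ => (hderiv s).hasDerivWithinAt)
    fun s hs => ?_
  rw [interior_Icc] at hs
  have hcs : c * s ≤ a := le_trans (by gcongr; exact hs.2.le) hcm
  exact mul_neg_of_pos_of_neg hc (segmentSlope_neg hc.le hε₀ hε hεa (hs.2.le.trans hm) hcs)

lemma supNorm_segment_xStar_xPrime (hk : 0 < k) (hkn : k ≤ n) (hε₀ : 0 ≤ ε) (hε : ε ≤ 1) :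
    supNorm (segment ℝ (xStar k ε) (xPrime (n := n) k ε)) = 1 := by
  refine supNorm_eq_of_isGreatest (left_mem_segment ℝ _ _) (norm_xStar hk hkn hε₀ hε) fun x hx => ?_
  have hball := (convex_closedBall (0 : Fin n → ℝ) 1).segment_subset
    (by simpa using (norm_xStar hk hkn hε₀ hε).le) (by simpa using norm_xPrime_le hε₀ hε) hx
  simpa using hball

lemma IsLexMax.eq_xStar (hk : 2 ≤ k) (hkn : k ≤ n) (hε₀ : 0 < ε) (hε : ε ≤ 2 / 3)
    {y : Fin n → ℝ} (hy : IsLexMax (segment ℝ (xStar k ε) (xPrime k ε)) y) : y = xStar k ε := by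
  have hStar := xStar_monotone (n := n) (k := k) (by linarith : ε ≤ 1)
  refine hy.eq_of_forall_sortedComp_zero_lt (by omega) (left_mem_segment ℝ _ _) fun x hx hne => ?_
  rw [sortedComp_of_monotone (monotone_of_mem_segment hStar (xPrime_monotone hε₀.le hε) hx),
    sortedComp_of_monotone hStar]
  rw [segment_eq_image_lineMap] at hx
  obtain ⟨t, ⟨ht, -⟩, rfl⟩ := hx
  have ht₀ : 0 < t := ht.lt_of_ne (by rintro rfl; exact hne (lineMap_apply_zero _ _))
  simp only [pi_lineMap_apply, lineMap_apply_ring', xStar, xPrime, tsub_pos_iff_lt,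
    show 1 < k by omega, ↓reduceIte, zero_sub, mul_neg, add_lt_iff_neg_right, Left.neg_neg_iff]
  positivity

lemma xStar_sub_lineMap_apply (hk : 2 ≤ k) (hkn : k ≤ n) (t : ℝ) :
    xStar k ε ⟨k - 1, Nat.sub_one_lt_of_le (by omega) hkn⟩
      - lineMap (xStar k ε) (xPrime k ε) t ⟨k - 1, Nat.sub_one_lt_of_le (by omega) hkn⟩
      = t / 3 := by
  simp only [pi_lineMap_apply, lineMap_apply_ring', xStar, xPrime, lt_self_iff_false,
    show k - 1 ≠ 0 by omega, show ¬k - 1 < k - 2 by omega, show k - 1 < k by omega, ↓reduceIte,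
    sub_add_cancel_right]
  ring

end Construction

theorem kth_component_slow_convergence {n k : ℕ} (hk3 : 3 ≤ k) (hkn : k ≤ n)
    (a : ℝ) (ha : 1 ≤ a) :
    ∃ X : Set (Fin n → ℝ),
      (∃ u v : Fin n → ℝ, X = segment ℝ u v) ∧
      supNorm X = 1 ∧
      ∀ c : ℝ, 0 < c → ∀ xstar, IsLexMax X xstar →
        ∀ xc ∈ X, (∀ x ∈ X, expLoss c xc ≤ expLoss c x) →
          (1 / 3 : ℝ) * min 1 (a / c) ≤
            sortedComp xstar ⟨k - 1, by omega⟩ - sortedComp xc ⟨k - 1, by omega⟩ := by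
  set ε : ℝ := exp (-(2 * a / 3)) / 8 with hε_def
  have hε₀ : 0 < ε := by positivity
  have hεa : ε * exp (2 * a / 3) = 1 / 8 := by
    rw [hε_def, div_mul_eq_mul_div, ← exp_add]; simp
  have hε : ε ≤ 1 / 8 := by nlinarith [one_le_exp (by linarith : 0 ≤ 2 * a / 3)]
  have hStar := xStar_monotone (n := n) (k := k) (by linarith : ε ≤ 1)
  refine ⟨segment ℝ (xStar k ε) (xPrime k ε), ⟨_, _, rfl⟩,
    supNorm_segment_xStar_xPrime (by omega) hkn hε₀.le (by linarith), ?_⟩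
  intro c hc xstar hstar xc hxc hmin
  obtain rfl := hstar.eq_xStar (by omega) hkn hε₀ (by linarith)
  have hmono := monotone_of_mem_segment hStar (xPrime_monotone hε₀.le (by linarith)) hxc
  rw [sortedComp_of_monotone hStar, sortedComp_of_monotone hmono]
  rw [segment_eq_image_lineMap] at hxc
  obtain ⟨t, ⟨ht, -⟩, rfl⟩ := hxc
  set m := min 1 (a / c)
  have hm : m ∈ Icc 0 1 := ⟨le_min zero_le_one (by positivity), min_le_left _ _⟩
  have hcm : c * m ≤ a :=
    calc c * m ≤ c * (a / c) := by gcongr; exact min_le_right _ _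
      _ = a := mul_div_cancel₀ a hc.ne'
  have hmt : m ≤ t :=
    le_of_strictAntiOn_Icc_of_le
      (strictAntiOn_expLoss_segment hk3 hkn hc hε₀.le hε hεa.le hm.2 hcm) hm.1 ht
      (hmin _ (lineMap_mem_segment ℝ _ _ hm))
  rw [xStar_sub_lineMap_apply (by omega) hkn]
  linarith
end
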